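/- arXiv:2004.13700 — 2 statements merged into one kernel-verified Lean document; each statement's English description precedes it below -/
import Mathlib

section
/- For λ > 1 and δ > 0, suppose b: (0,δ] → ℝ satisfies b(s) = 1/(λs) + O(1) as s → 0. Define ρ(t) = exp(∫ₜ^δ b(s) ds). Then ∫₀^δ ρ(t) dt < ∞, ∫₀^δ (1 + |b(t)|/2)/ρ(t) dt < ∞, and ∫₀^δ |b(t)|/2 dt = ∞. -/
/-!
Integrating `b s = p / s + O(1)` with `p = 1 / λ` gives `∫ₜ^δ b = p log (δ / t) + O(1)`, so
`ρ t ≍ (δ / t) ^ p`. Hence `ρ` is dominated by `t ^ (-p)`, and, since `1 + |b t| / 2 = O(1 / t)`,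
the second integrand by `t ^ (p - 1)`; both exponents exceed `-1` because `0 < p < 1`.
On the other hand `|b t| ≥ p / t - C`, which is not integrable at `0`.
-/

open Set Real MeasureTheory intervalIntegral

theorem integrableOn_Ioc_of_abs_le_rpow {f : ℝ → ℝ} {δ K r : ℝ}
    (hf : AEStronglyMeasurable f (volume.restrict (Ioc 0 δ))) (hr : -1 < r)
    (hbound : ∀ t ∈ Ioc 0 δ, |f t| ≤ K * t ^ r) :
    IntegrableOn f (Ioc 0 δ) := by
  refine Integrable.mono' ((intervalIntegrable_rpow' hr).1.const_mul K) hf ?_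
  exact (ae_restrict_iff' measurableSet_Ioc).2 (.of_forall hbound)

theorem lintegral_Ioc_ofReal_inv_eq_top {δ : ℝ} (hδ : 0 < δ) :
    ∫⁻ t in Ioc 0 δ, ENNReal.ofReal t⁻¹ = ⊤ := by
  by_contra hfin
  have hint := (lintegral_ofReal_ne_top_iff_integrable measurable_inv.aestronglyMeasurable
    ((ae_restrict_iff' measurableSet_Ioc).2 (.of_forall fun t ht => inv_nonneg.2 ht.1.le))).1 hfin
  simpa [hδ.ne, hδ.le] using intervalIntegrable_inv_iff.1
    ((intervalIntegrable_iff_integrableOn_Ioc_of_le hδ.le).2 hint)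

theorem lintegral_Ioc_ofReal_eq_top_of_inv_le {f : ℝ → ℝ} {δ a c : ℝ} (hδ : 0 < δ) (ha : 0 < a)
    (hf : ∀ t ∈ Ioc 0 δ, a * t⁻¹ ≤ f t + c) :
    ∫⁻ t in Ioc 0 δ, ENNReal.ofReal (f t) = ⊤ := by
  have hinv : ∫⁻ t in Ioc 0 δ, ENNReal.ofReal (a * t⁻¹) = ⊤ := by
    simp_rw [ENNReal.ofReal_mul ha.le]
    rw [lintegral_const_mul' _ _ ENNReal.ofReal_ne_top, lintegral_Ioc_ofReal_inv_eq_top hδ,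
      ENNReal.mul_top (ENNReal.ofReal_pos.2 ha).ne']
  by_contra hfin
  have hlt : ∫⁻ t in Ioc 0 δ, ENNReal.ofReal (a * t⁻¹) < ⊤ := calc
    _ ≤ ∫⁻ t in Ioc 0 δ, (ENNReal.ofReal (f t) + ENNReal.ofReal c) :=
        setLIntegral_mono' measurableSet_Ioc fun t ht =>
          (ENNReal.ofReal_le_ofReal (hf t ht)).trans ENNReal.ofReal_add_le
    _ = (∫⁻ t in Ioc 0 δ, ENNReal.ofReal (f t)) + ENNReal.ofReal c * volume (Ioc 0 δ) := by
        rw [lintegral_add_right _ measurable_const, setLIntegral_const]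
    _ < ⊤ := ENNReal.add_lt_top.2
        ⟨lt_top_iff_ne_top.2 hfin, ENNReal.mul_lt_top ENNReal.ofReal_lt_top measure_Ioc_lt_top⟩
  exact hlt.ne hinv

theorem continuousOn_integral_left_Ioc {b : ℝ → ℝ} {a δ : ℝ} (hb : ContinuousOn b (Ioc a δ)) :
    ContinuousOn (fun t => ∫ s in t..δ, b s) (Ioc a δ) := by
  intro t ⟨hat, htδ⟩
  obtain ⟨m, ham, hmt⟩ := exists_between hat
  have hmδ : m ≤ δ := hmt.le.trans htδ
  have hint : IntegrableOn b (uIcc m δ) := by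
    rw [uIcc_of_le hmδ]
    exact (hb.mono fun x hx => ⟨ham.trans_le hx.1, hx.2⟩).integrableOn_Icc
  have hcont := continuousOn_primitive_interval_left hint
  rw [uIcc_of_le hmδ] at hcont
  refine (hcont t ⟨hmt.le, htδ⟩).mono_of_mem_nhdsWithin ?_
  exact Filter.mem_of_superset (inter_mem_nhdsWithin _ (Ioi_mem_nhds hmt))
    fun x hx => ⟨le_of_lt hx.2, hx.1.2⟩

theorem abs_integral_sub_mul_log_le {b : ℝ → ℝ} {δ p C t : ℝ} (hb : ContinuousOn b (Ioc 0 δ))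
    (hC : ∀ s ∈ Ioc 0 δ, |b s - p / s| ≤ C) (ht : t ∈ Ioc 0 δ) :
    |(∫ s in t..δ, b s) - p * log (δ / t)| ≤ C * δ := by
  have hsub : uIcc t δ ⊆ Ioc 0 δ := by
    rw [uIcc_of_le ht.2]
    exact fun x hx => ⟨ht.1.trans_le hx.1, hx.2⟩
  have h0 : (0 : ℝ) ∉ uIcc t δ := fun h => (hsub h).1.false
  have hpole : ContinuousOn (fun s => p / s) (uIcc t δ) :=
    continuousOn_const.div continuousOn_id fun s hs => (hsub hs).1.ne'
  have hlog : ∫ s in t..δ, p / s = p * log (δ / t) := by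
    simp only [div_eq_mul_inv p, intervalIntegral.integral_const_mul, integral_inv h0]
  rw [← hlog, ← intervalIntegral.integral_sub ((hb.mono hsub).intervalIntegrable)
    hpole.intervalIntegrable]
  calc |∫ s in t..δ, (b s - p / s)| ≤ C * |δ - t| := by
        rw [← Real.norm_eq_abs]
        exact norm_integral_le_of_norm_le_const fun s hs => hC s (hsub (uIoc_subset_uIcc hs))
    _ ≤ C * δ := by
        have hC0 : 0 ≤ C := (abs_nonneg _).trans (hC t ht)
        rw [abs_of_nonneg (sub_nonneg.2 ht.2)]
        nlinarith [ht.1]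

theorem exp_le_of_abs_sub_mul_log_le {x p y M : ℝ} (hy : 0 < y) (h : |x - p * log y| ≤ M) :
    exp x ≤ exp M * y ^ p := by
  rw [rpow_def_of_pos hy, ← exp_add]
  exact exp_le_exp.2 (by linarith [(abs_le.1 h).2])

section

variable {b : ℝ → ℝ} {δ p C : ℝ}

theorem integrableOn_exp_integral (hp : p < 1) (hb : ContinuousOn b (Ioc 0 δ))
    (hC : ∀ s ∈ Ioc 0 δ, |b s - p / s| ≤ C) :
    IntegrableOn (fun t => exp (∫ s in t..δ, b s)) (Ioc 0 δ) := by
  refine integrableOn_Ioc_of_abs_le_rpow (K := exp (C * δ) * δ ^ p)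
    ((continuousOn_integral_left_Ioc hb).rexp.aestronglyMeasurable measurableSet_Ioc)
    (neg_lt_neg hp) fun t ht => ?_
  have hδ : 0 < δ := ht.1.trans_le ht.2
  rw [abs_of_pos (exp_pos _)]
  calc _ ≤ exp (C * δ) * (δ / t) ^ p :=
        exp_le_of_abs_sub_mul_log_le (div_pos hδ ht.1) (abs_integral_sub_mul_log_le hb hC ht)
    _ = exp (C * δ) * δ ^ p * t ^ (-p) := by
        rw [div_rpow hδ.le ht.1.le, rpow_neg ht.1.le]; ring

theorem integrableOn_div_exp_integral (hp : 0 < p) (hb : ContinuousOn b (Ioc 0 δ))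
    (hC : ∀ s ∈ Ioc 0 δ, |b s - p / s| ≤ C) :
    IntegrableOn (fun t => (1 + |b t| / 2) / exp (∫ s in t..δ, b s)) (Ioc 0 δ) := by
  set K := (1 + C / 2) * δ + p / 2 with hK
  refine integrableOn_Ioc_of_abs_le_rpow (K := K * exp (C * δ) * δ ^ (-p)) (r := p - 1)
    (((continuousOn_const.add (hb.abs.div_const 2)).div
      (continuousOn_integral_left_Ioc hb).rexp fun _ _ => (exp_pos _).ne').aestronglyMeasurable
        measurableSet_Ioc)
    (by linarith) fun t ht => ?_
  have hδ : 0 < δ := ht.1.trans_le ht.2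
  have hC0 : 0 ≤ C := (abs_nonneg _).trans (hC t ht)
  have hbt : |b t| ≤ p / t + C := by
    have := abs_sub_abs_le_abs_sub (b t) (p / t)
    rw [abs_of_pos (div_pos hp ht.1)] at this
    linarith [hC t ht]
  have hweight : 1 + |b t| / 2 ≤ K / t := by
    rw [le_div_iff₀ ht.1, hK]
    have : t * (p / t) = p := mul_div_cancel₀ p ht.1.ne'
    nlinarith [ht.2, mul_le_mul_of_nonneg_left hbt ht.1.le, mul_le_mul_of_nonneg_left ht.2 hC0]
  have hexp : (exp (∫ s in t..δ, b s))⁻¹ ≤ exp (C * δ) * (δ / t) ^ (-p) := by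
    rw [← exp_neg]
    refine exp_le_of_abs_sub_mul_log_le (div_pos hδ ht.1) ?_
    rw [show ∀ x y : ℝ, -x - -p * y = -(x - p * y) by intros; ring, abs_neg]
    exact abs_integral_sub_mul_log_le hb hC ht
  rw [abs_of_nonneg (by positivity), div_eq_mul_inv]
  calc _ ≤ K / t * (exp (C * δ) * (δ / t) ^ (-p)) :=
        mul_le_mul hweight hexp (by positivity)
          ((by positivity : (0 : ℝ) ≤ 1 + |b t| / 2).trans hweight)
    _ = K * exp (C * δ) * δ ^ (-p) * t ^ (p - 1) := by
        rw [div_rpow hδ.le ht.1.le, rpow_neg ht.1.le, rpow_sub_one ht.1.ne']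
        field_simp

theorem lintegral_abs_half_eq_top (hδ : 0 < δ) (hp : 0 < p)
    (hC : ∀ s ∈ Ioc 0 δ, |b s - p / s| ≤ C) :
    ∫⁻ t in Ioc 0 δ, ENNReal.ofReal (|b t| / 2) = ⊤ := by
  refine lintegral_Ioc_ofReal_eq_top_of_inv_le (c := C / 2) hδ (half_pos hp) fun t ht => ?_
  have := abs_sub_abs_le_abs_sub (p / t) (b t)
  rw [abs_sub_comm, abs_of_pos (div_pos hp ht.1)] at this
  have hpt : p / 2 * t⁻¹ = p / t / 2 := by ring
  linarith [hC t ht]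

end

open MeasureTheory in
theorem hyperbolic_point_accessible (lam δ C : ℝ) (hlam : 1 < lam)
    (hδ : 0 < δ) (b : ℝ → ℝ) (hb : ContinuousOn b (Set.Ioc 0 δ))
    (hC : ∀ s, 0 < s → s ≤ δ → |b s - 1 / (lam * s)| ≤ C) :
    IntegrableOn (fun t => Real.exp (∫ s in t..δ, b s)) (Set.Ioc 0 δ) ∧
    IntegrableOn (fun t => (1 + |b t| / 2) / Real.exp (∫ s in t..δ, b s)) (Set.Ioc 0 δ) ∧
    ∫⁻ t in Set.Ioc 0 δ, ENNReal.ofReal (|b t| / 2) = ⊤ := by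
  have hC' : ∀ s ∈ Ioc 0 δ, |b s - lam⁻¹ / s| ≤ C := fun s hs => by
    rw [div_eq_mul_inv, ← mul_inv, ← one_div]
    exact hC s hs.1 hs.2
  have hp0 : 0 < lam⁻¹ := inv_pos.2 (zero_lt_one.trans hlam)
  have hp1 : lam⁻¹ < 1 := inv_lt_one_of_one_lt₀ hlam
  exact ⟨integrableOn_exp_integral hp1 hb hC', integrableOn_div_exp_integral hp0 hb hC',
    lintegral_abs_half_eq_top hδ hp0 hC'⟩
end

section
/- On the surface S = {(x,y,z,w) ∈ SL(2,ℝ) : y = z}, parameterise the sheet containing the identity by x = cosh(kr) + sinh(kr)cos θ, w = cosh(kr) - sinh(kr)cos θ, y = z = sinh(kr)sin θ for r > 0, θ ∈ [0,2π). With u(x,y,z,w) = y - z and X₁ = 2kX, X₂ = 2kY, X₀ = 4k²K as above, one has (X₁u)(r,θ) = -2k·sinh(kr)·sin θ, (X₂u)(r,θ) = 2k·sinh(kr)·cos θ, (X₀u)(r,θ) = 4k²·cosh(kr), and hence b = X₀u/√((X₁u)² + (X₂u)²) = 2k·coth(kr). -/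
noncomputable def VX (f : ℝ × ℝ × ℝ × ℝ → ℝ) (p : ℝ × ℝ × ℝ × ℝ) : ℝ :=
  (1 / 2) * (p.1 * fderiv ℝ f p (1, 0, 0, 0) - p.2.1 * fderiv ℝ f p (0, 1, 0, 0)
    + p.2.2.1 * fderiv ℝ f p (0, 0, 1, 0) - p.2.2.2 * fderiv ℝ f p (0, 0, 0, 1))

noncomputable def VY (f : ℝ × ℝ × ℝ × ℝ → ℝ) (p : ℝ × ℝ × ℝ × ℝ) : ℝ :=
  (1 / 2) * (p.2.1 * fderiv ℝ f p (1, 0, 0, 0) + p.1 * fderiv ℝ f p (0, 1, 0, 0)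
    + p.2.2.2 * fderiv ℝ f p (0, 0, 1, 0) + p.2.2.1 * fderiv ℝ f p (0, 0, 0, 1))

noncomputable def VK (f : ℝ × ℝ × ℝ × ℝ → ℝ) (p : ℝ × ℝ × ℝ × ℝ) : ℝ :=
  (1 / 2) * (-p.2.1 * fderiv ℝ f p (1, 0, 0, 0) + p.1 * fderiv ℝ f p (0, 1, 0, 0)
    - p.2.2.2 * fderiv ℝ f p (0, 0, 1, 0) + p.2.2.1 * fderiv ℝ f p (0, 0, 0, 1))

noncomputable def LX1 (k : ℝ) (f : ℝ × ℝ × ℝ × ℝ → ℝ) (p : ℝ × ℝ × ℝ × ℝ) : ℝ :=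
  2 * k * VX f p

noncomputable def LX2 (k : ℝ) (f : ℝ × ℝ × ℝ × ℝ → ℝ) (p : ℝ × ℝ × ℝ × ℝ) : ℝ :=
  2 * k * VY f p

noncomputable def LX0 (k : ℝ) (f : ℝ × ℝ × ℝ × ℝ → ℝ) (p : ℝ × ℝ × ℝ × ℝ) : ℝ :=
  4 * k ^ 2 * VK f p

/- Since `u = y - z` is linear, `Xu`, `Yu` and `Ku` are read off from the coefficients of `∂_y`
and `∂_z`: they are linear in the coordinates. On the sheet `x + w = 2 cosh (k r)`,
`x - w = 2 sinh (k r) cos θ` and `y + z = 2 sinh (k r) sin θ`, so `(X₁u, X₂u)` is the polar vector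
of radius `2k sinh (k r)` and `b = X₀u / (2k sinh (k r))`. -/

open Real

lemma fderiv_snd_fst_sub_snd_snd_fst (p v : ℝ × ℝ × ℝ × ℝ) :
    fderiv ℝ (fun q : ℝ × ℝ × ℝ × ℝ => q.2.1 - q.2.2.1) p v = v.2.1 - v.2.2.1 := by
  rw [(hasFDerivAt_snd.fst.fun_sub hasFDerivAt_snd.snd.fst).fderiv]
  rfl

lemma VX_snd_fst_sub_snd_snd_fst (p : ℝ × ℝ × ℝ × ℝ) :
    VX (fun q => q.2.1 - q.2.2.1) p = -(p.2.1 + p.2.2.1) / 2 := by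
  simp only [VX, fderiv_snd_fst_sub_snd_snd_fst]
  ring

lemma VY_snd_fst_sub_snd_snd_fst (p : ℝ × ℝ × ℝ × ℝ) :
    VY (fun q => q.2.1 - q.2.2.1) p = (p.1 - p.2.2.2) / 2 := by
  simp only [VY, fderiv_snd_fst_sub_snd_snd_fst]
  ring

lemma VK_snd_fst_sub_snd_snd_fst (p : ℝ × ℝ × ℝ × ℝ) :
    VK (fun q => q.2.1 - q.2.2.1) p = (p.1 + p.2.2.2) / 2 := by
  simp only [VK, fderiv_snd_fst_sub_snd_snd_fst]
  ring

lemma sqrt_mul_sin_sq_add_mul_cos_sq {ρ : ℝ} (hρ : 0 ≤ ρ) (θ : ℝ) :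
    √((ρ * sin θ) ^ 2 + (ρ * cos θ) ^ 2) = ρ := by
  rw [mul_pow, mul_pow, ← mul_add, sin_sq_add_cos_sq, mul_one, sqrt_sq hρ]

theorem sl2_surface_drift (k r θ : ℝ) (hk : 0 < k) (hr : 0 < r) :
    let u : ℝ × ℝ × ℝ × ℝ → ℝ := fun p => p.2.1 - p.2.2.1
    let P : ℝ × ℝ × ℝ × ℝ :=
      (Real.cosh (k * r) + Real.sinh (k * r) * Real.cos θ,
       Real.sinh (k * r) * Real.sin θ,
       Real.sinh (k * r) * Real.sin θ,
       Real.cosh (k * r) - Real.sinh (k * r) * Real.cos θ)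
    (LX1 k u P = -(2 * k * Real.sinh (k * r) * Real.sin θ)) ∧
    (LX2 k u P = 2 * k * Real.sinh (k * r) * Real.cos θ) ∧
    (LX0 k u P = 4 * k ^ 2 * Real.cosh (k * r)) ∧
    (LX0 k u P / Real.sqrt ((LX1 k u P) ^ 2 + (LX2 k u P) ^ 2)
      = 2 * k * (Real.cosh (k * r) / Real.sinh (k * r))) := by
  intro u P
  have hX1 : LX1 k u P = -(2 * k * sinh (k * r) * sin θ) := by
    simp only [LX1, u, VX_snd_fst_sub_snd_snd_fst, P]
    ring
  have hX2 : LX2 k u P = 2 * k * sinh (k * r) * cos θ := by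
    simp only [LX2, u, VY_snd_fst_sub_snd_snd_fst, P]
    ring
  have hX0 : LX0 k u P = 4 * k ^ 2 * cosh (k * r) := by
    simp only [LX0, u, VK_snd_fst_sub_snd_snd_fst, P]
    ring
  refine ⟨hX1, hX2, hX0, ?_⟩
  have hsinh : 0 < sinh (k * r) := sinh_pos_iff.2 (mul_pos hk hr)
  rw [hX0, hX1, hX2, neg_sq, sqrt_mul_sin_sq_add_mul_cos_sq (by positivity)]
  field_simp
  ring
end
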